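/- Let V be a finite set partitioned into m disjoint groups V_1, …, V_m, let f : 2^V → ℝ be nonnegative and submodular, let α be a real with 0 ≤ α ≤ 1/2, and let A ⊆ V. For each group i ∈ [m] with |A ∩ V_i| < ⌊α·|V_i|⌋, let B_i be a uniform random subset of V_i ∖ A of size ⌊α·|V_i|⌋ − |A ∩ V_i|, sampled independently across groups; for all other groups set B_i = ∅. Then E[f(A ∪ (⋃_{i∈[m]} B_i))] ≥ (1/2)·f(A). -/

import Mathlib

/-!
If two outcomes `B, B'` are groupwise disjoint, then `⋃ B'` is disjoint from `A ∪ ⋃ B`, so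
submodularity and nonnegativity give `f A ≤ f (A ∪ ⋃ B) + f (A ∪ ⋃ B')`. Since
`2 k i ≤ |V i \ A|`, every outcome is groupwise disjoint from the same positive number of
outcomes; averaging the inequality over all such pairs yields `f A ≤ 2 E[f (A ∪ ⋃ B)]`.
-/

open Finset Function

def IsSubmodular {V β : Type*} [DecidableEq V] [AddCommGroup β] [PartialOrder β]
    (f : Finset V → β) : Prop :=
  ∀ X Y : Finset V, X ⊆ Y → ∀ e ∉ Y, f (insert e Y) - f Y ≤ f (insert e X) - f X

namespace IsSubmodular

variable {V β : Type*} [DecidableEq V] [AddCommGroup β] [PartialOrder β] [IsOrderedAddMonoid β]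
  {f : Finset V → β}

theorem sub_le_sub_of_disjoint (hf : IsSubmodular f) {X Y : Finset V} (hXY : X ⊆ Y)
    {S : Finset V} (hS : Disjoint S Y) : f (Y ∪ S) - f Y ≤ f (X ∪ S) - f X := by
  induction S using Finset.induction_on with
  | empty => simp
  | @insert e S he ih =>
    rw [disjoint_insert_left] at hS
    have heYS : e ∉ Y ∪ S := by simp [hS.1, he]
    have step := hf (X ∪ S) (Y ∪ S) (union_subset_union_left hXY) e heYS
    rw [union_insert, union_insert]
    calc f (insert e (Y ∪ S)) - f Y
        = (f (insert e (Y ∪ S)) - f (Y ∪ S)) + (f (Y ∪ S) - f Y) := by abel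
      _ ≤ (f (insert e (X ∪ S)) - f (X ∪ S)) + (f (X ∪ S) - f X) :=
          add_le_add step (ih hS.2)
      _ = f (insert e (X ∪ S)) - f X := by abel

theorem le_add_of_disjoint (hf : IsSubmodular f) (hf0 : ∀ S, 0 ≤ f S) {A S T : Finset V}
    (hT : Disjoint T (A ∪ S)) : f A ≤ f (A ∪ S) + f (A ∪ T) := by
  have h := hf.sub_le_sub_of_disjoint subset_union_left hT
  have h0 := hf0 (A ∪ S ∪ T)
  rw [sub_le_sub_iff] at h
  calc f A ≤ f (A ∪ S ∪ T) + f A := le_add_of_nonneg_left h0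
    _ ≤ f (A ∪ T) + f (A ∪ S) := h
    _ = f (A ∪ S) + f (A ∪ T) := add_comm _ _

end IsSubmodular

theorem card_mul_le_two_mul_sum_of_regular {α K : Type*} [CommRing K] [LinearOrder K]
    [IsStrictOrderedRing K] (s : Finset α) (r : α → α → Prop)
    [DecidableRel r] (hr : ∀ ⦃x y⦄, r x y → r y x) {d : ℕ} (hd : 0 < d)
    (hdeg : ∀ x ∈ s, #{y ∈ s | r x y} = d) {g : α → K} {c : K}
    (hc : ∀ x ∈ s, ∀ y ∈ s, r x y → c ≤ g x + g y) :
    #s * c ≤ 2 * ∑ x ∈ s, g x := by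
  have hconst (t : α → K) :
      ∑ x ∈ s, ∑ _y ∈ s.bipartiteAbove r x, t x = d * ∑ x ∈ s, t x := by
    rw [mul_sum]
    exact sum_congr rfl fun x hx => by rw [sum_const, bipartiteAbove, hdeg x hx, nsmul_eq_mul]
  have hswap : ∑ x ∈ s, ∑ y ∈ s.bipartiteAbove r x, g y = d * ∑ y ∈ s, g y := by
    rw [sum_sum_bipartiteAbove_eq_sum_sum_bipartiteBelow, ← hconst]
    refine sum_congr rfl fun y _ => sum_congr ?_ fun _ _ => rfl
    exact filter_congr fun x _ => ⟨@hr x y, @hr y x⟩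
  refine le_of_mul_le_mul_left ?_ (Nat.cast_pos.mpr hd : (0 : K) < d)
  calc (d : K) * (#s * c) = ∑ x ∈ s, ∑ _y ∈ s.bipartiteAbove r x, c := by
        rw [hconst fun _ => c, sum_const, nsmul_eq_mul]
    _ ≤ ∑ x ∈ s, ∑ y ∈ s.bipartiteAbove r x, (g x + g y) := by
        gcongr with x hx y hy
        rw [mem_bipartiteAbove] at hy
        exact hc x hx y hy.1 hy.2
    _ = d * (2 * ∑ x ∈ s, g x) := by
        simp_rw [sum_add_distrib]
        rw [hconst g, hswap]
        ring

section PiFinset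

variable {ι V : Type*}

def GroupwiseDisjoint (B B' : ι → Finset V) : Prop := ∀ i, Disjoint (B i) (B' i)

instance [Fintype ι] [DecidableEq V] (B B' : ι → Finset V) :
    Decidable (GroupwiseDisjoint B B') :=
  inferInstanceAs (Decidable (∀ _, _))

theorem GroupwiseDisjoint.symm {B B' : ι → Finset V} (h : GroupwiseDisjoint B B') :
    GroupwiseDisjoint B' B := fun i => (h i).symm

theorem disjoint_biUnion_of_groupwiseDisjoint [Fintype ι] [DecidableEq V] {W : ι → Finset V}
    (hW : Pairwise (Disjoint on W)) {B B' : ι → Finset V} (hB : ∀ i, B i ⊆ W i)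
    (hB' : ∀ i, B' i ⊆ W i) (h : GroupwiseDisjoint B B') :
    Disjoint (univ.biUnion B) (univ.biUnion B') := by
  simp only [disjoint_biUnion_left, disjoint_biUnion_right, mem_univ, forall_const]
  intro j i
  rcases eq_or_ne i j with rfl | hij
  · exact h i
  · exact (hW hij).mono (hB i) (hB' j)

variable [Fintype ι] [DecidableEq ι] [DecidableEq V]

theorem filter_groupwiseDisjoint_piFinset_powersetCard (W : ι → Finset V) (k : ι → ℕ)
    (B : ι → Finset V) :
    {B' ∈ Fintype.piFinset fun i => (W i).powersetCard (k i) | GroupwiseDisjoint B B'} =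
      Fintype.piFinset fun i => (W i \ B i).powersetCard (k i) := by
  ext B'
  rw [mem_filter]
  simp only [Fintype.mem_piFinset, mem_powersetCard, subset_sdiff]
  exact ⟨fun h i => ⟨⟨(h.1 i).1, (h.2 i).symm⟩, (h.1 i).2⟩,
    fun h => ⟨fun i => ⟨(h i).1.1, (h i).2⟩, fun i => (h i).1.2.symm⟩⟩

theorem card_filter_groupwiseDisjoint_piFinset_powersetCard (W : ι → Finset V) (k : ι → ℕ)
    {B : ι → Finset V} (hB : B ∈ Fintype.piFinset fun i => (W i).powersetCard (k i)) :
    #{B' ∈ Fintype.piFinset fun i => (W i).powersetCard (k i) | GroupwiseDisjoint B B'} =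
      ∏ i, (#(W i) - k i).choose (k i) := by
  simp only [Fintype.mem_piFinset, mem_powersetCard] at hB
  rw [filter_groupwiseDisjoint_piFinset_powersetCard, Fintype.card_piFinset]
  refine prod_congr rfl fun i _ => ?_
  rw [card_powersetCard, card_sdiff_of_subset (hB i).1, (hB i).2]

end PiFinset

theorem IsSubmodular.half_mul_le_sum_piFinset_powersetCard_div_card {ι V : Type*} [Fintype ι]
    [DecidableEq ι] [DecidableEq V] {f : Finset V → ℝ} (hf : IsSubmodular f)
    (hf0 : ∀ S, 0 ≤ f S) (A : Finset V) {W : ι → Finset V} (hW : Pairwise (Disjoint on W))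
    (hWA : ∀ i, Disjoint (W i) A) {k : ι → ℕ} (hk : ∀ i, 2 * k i ≤ #(W i)) :
    (1 / 2 : ℝ) * f A ≤
      (∑ B ∈ Fintype.piFinset (fun i => (W i).powersetCard (k i)), f (A ∪ univ.biUnion B)) /
        #(Fintype.piFinset fun i => (W i).powersetCard (k i)) := by
  set 𝒞 := Fintype.piFinset fun i => (W i).powersetCard (k i)
  have hsub : ∀ B ∈ 𝒞, ∀ i, B i ⊆ W i := fun B hB i =>
    (mem_powersetCard.mp (Fintype.mem_piFinset.mp hB i)).1
  have hk' : ∀ i, k i ≤ #(W i) - k i := fun i => by have := hk i; omega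
  have hcard : 0 < #𝒞 := by
    rw [Fintype.card_piFinset]
    exact prod_pos fun i _ => by
      rw [card_powersetCard]
      exact Nat.choose_pos ((hk' i).trans (Nat.sub_le _ _))
  have hregular : #𝒞 * f A ≤ 2 * ∑ B ∈ 𝒞, f (A ∪ univ.biUnion B) := by
    refine card_mul_le_two_mul_sum_of_regular 𝒞 GroupwiseDisjoint (fun _ _ h => h.symm)
      (prod_pos fun i _ => Nat.choose_pos (hk' i))
      (fun B hB => card_filter_groupwiseDisjoint_piFinset_powersetCard W k hB) ?_
    intro B hB B' hB' hBB'
    refine hf.le_add_of_disjoint hf0 (disjoint_union_right.mpr ⟨?_, ?_⟩)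
    · exact (disjoint_biUnion_left _ _ _).mpr fun i _ => (hWA i).mono_left (hsub B' hB' i)
    · exact (disjoint_biUnion_of_groupwiseDisjoint hW (hsub B hB) (hsub B' hB') hBB').symm
  rw [le_div_iff₀ (by exact_mod_cast hcard)]
  linarith

theorem two_mul_floor_mul_le {α : ℝ} (hα0 : 0 ≤ α) (hα : α ≤ 1 / 2) (n : ℕ) :
    2 * ⌊α * n⌋₊ ≤ n := by
  have hfloor : (⌊α * n⌋₊ : ℝ) ≤ α * n := Nat.floor_le (by positivity)
  have hn : (0 : ℝ) ≤ n := n.cast_nonneg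
  exact_mod_cast (by push_cast; nlinarith : ((2 * ⌊α * n⌋₊ : ℕ) : ℝ) ≤ n)

theorem two_mul_floor_mul_card_sub_card_inter_le {V : Type*} [DecidableEq V] {α : ℝ}
    (hα0 : 0 ≤ α) (hα : α ≤ 1 / 2) (s A : Finset V) :
    2 * (⌊α * #s⌋₊ - #(A ∩ s)) ≤ #(s \ A) := by
  have hfloor := two_mul_floor_mul_le hα0 hα #s
  have hinter : #(A ∩ s) ≤ #s := card_le_card inter_subset_right
  rw [card_sdiff]
  omega

theorem stmt_5_general {V : Type*} [DecidableEq V]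
    (m : ℕ) (Vg : Fin m → Finset V)
    (hdisj : ∀ i j : Fin m, i ≠ j → Disjoint (Vg i) (Vg j))
    (f : Finset V → ℝ)
    (hf_nonneg : ∀ S : Finset V, 0 ≤ f S)
    (hf_submod : ∀ X Y : Finset V, X ⊆ Y → ∀ e ∉ Y,
      f (insert e Y) - f Y ≤ f (insert e X) - f X)
    (α : ℝ) (hα0 : 0 ≤ α) (hα : α ≤ 1 / 2)
    (A : Finset V)
    (k : Fin m → ℕ)
    (hk : ∀ i : Fin m, k i = ⌊α * ((Vg i).card : ℝ)⌋₊ - (A ∩ Vg i).card)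
    (𝒞 : Finset (Fin m → Finset V))
    (h𝒞 : 𝒞 = Fintype.piFinset fun i => (Vg i \ A).powersetCard (k i)) :
    (1 / 2 : ℝ) * f A ≤
      (∑ B ∈ 𝒞, f (A ∪ Finset.univ.biUnion fun i => B i)) / (𝒞.card : ℝ) := by
  subst h𝒞
  refine IsSubmodular.half_mul_le_sum_piFinset_powersetCard_div_card hf_submod hf_nonneg A
    (fun i j hij => (hdisj i j hij).mono sdiff_subset sdiff_subset) (fun i => sdiff_disjoint)
    (fun i => ?_)
  rw [hk i]
  exact two_mul_floor_mul_card_sub_card_inter_le hα0 hα (Vg i) A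

/-- For each group `i` with `|A ∩ V i| < ⌊α |V i|⌋`, a uniform random
subset `B i` of `V i \ A` of size `⌊α |V i|⌋ - |A ∩ V i|` is drawn, independently across
groups (`B i = ∅` for the other groups; note that natural subtraction makes `k i = 0` in
that case).  The expectation is taken over the uniform product distribution, i.e. it is
the average of `f (A ∪ ⋃ i, B i)` over the product `𝒞` of the families of candidate
subsets.  Then `E[f(A ∪ ⋃ i, B i)] ≥ (1/2) * f A` whenever `0 ≤ α ≤ 1/2`. -/
theorem stmt_5 {V : Type*} [Fintype V] [DecidableEq V]
    (m : ℕ) (Vg : Fin m → Finset V)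
    (hdisj : ∀ i j : Fin m, i ≠ j → Disjoint (Vg i) (Vg j))
    (hcover : Finset.univ.biUnion Vg = (Finset.univ : Finset V))
    (f : Finset V → ℝ)
    (hf_nonneg : ∀ S : Finset V, 0 ≤ f S)
    (hf_submod : ∀ X Y : Finset V, X ⊆ Y → ∀ e ∉ Y,
      f (insert e Y) - f Y ≤ f (insert e X) - f X)
    (α : ℝ) (hα0 : 0 ≤ α) (hα : α ≤ 1 / 2)
    (A : Finset V)
    (k : Fin m → ℕ)
    (hk : ∀ i : Fin m, k i = ⌊α * ((Vg i).card : ℝ)⌋₊ - (A ∩ Vg i).card)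
    (𝒞 : Finset (Fin m → Finset V))
    (h𝒞 : 𝒞 = Fintype.piFinset fun i => (Vg i \ A).powersetCard (k i)) :
    (1 / 2 : ℝ) * f A ≤
      (∑ B ∈ 𝒞, f (A ∪ Finset.univ.biUnion fun i => B i)) / (𝒞.card : ℝ) :=
  stmt_5_general m Vg hdisj f hf_nonneg hf_submod α hα0 hα A k hk 𝒞 h𝒞
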